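/- arXiv:1703.04459 — 3 statements merged into one kernel-verified Lean document; each statement's English description precedes it below -/
import Mathlib

section
/- For A ∈ ℝ^{n×n} with all eigenvalues having negative real part, the Lyapunov operator L_A(H) = AH + HA^T on symmetric matrices is invertible, and for every positive semidefinite Y there exists a unique positive semidefinite X with AX + XA^T = -Y, given by X = ∫₀^∞ e^{tA} Y e^{tA^T} dt. -/
/-!
Every eigenvalue `μ` of `A` has `Re μ < 0`, and every eigenvalue of `exp A` is `exp μ` for such a
`μ` (an eigenvector of `exp A` can be chosen to be an eigenvector of `A`, since they commute). So
the spectral radius of `exp A` is `< 1`, by Gelfand's formula some power `exp (N • A)` has norm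
`< 1`, and the semigroup `t ↦ exp (t • A)` decays exponentially.

Then `g t = exp (t • A) * Y * exp (t • Aᵀ)` satisfies `g' = A * g + g * Aᵀ` and `g t → 0`, so
integrating over `(0, ∞)` gives `A * X + X * Aᵀ = -Y` for `X = ∫ g`. If `A * D + D * Aᵀ = 0`, the
same curve started at `D` is constant and tends to `0`, so `D = 0`. Injectivity of
`X ↦ A * X + X * Aᵀ` gives uniqueness, and symmetry of the solution because `Xᵀ` solves the same
equation when `Y` is symmetric; `X` is positive semidefinite as an integral of the positive
semidefinite matrices `g t`.
-/

open MeasureTheory NormedSpace Filter Asymptotics Topology Set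

theorem exists_isBigO_exp_neg_of_map_add_eq_mul {𝔸 : Type*} [SeminormedRing 𝔸] {f : ℝ → 𝔸}
    (hf : ContinuousOn f (Ici 0)) (h0 : f 0 = 1)
    (hadd : ∀ s t, 0 ≤ s → 0 ≤ t → f (s + t) = f s * f t) {T : ℝ} (hT : 0 < T)
    (hfT : ‖f T‖ < 1) : ∃ ν > 0, f =O[atTop] fun t => Real.exp (-ν * t) := by
  -- `ρ ≥ 1 / 2` keeps `Real.log ρ` meaningful even when `f T = 0`.
  set ρ := max ‖f T‖ (1 / 2)
  have hρ0 : 0 < ρ := lt_max_of_lt_right one_half_pos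
  have hlogρ : Real.log ρ < 0 := Real.log_neg hρ0 (max_lt hfT one_half_lt_one)
  obtain ⟨M, hM⟩ := (isCompact_Icc (a := 0) (b := T)).exists_bound_of_continuousOn
    (hf.mono Icc_subset_Ici_self)
  have hM0 : 0 ≤ M := (norm_nonneg _).trans (hM 0 ⟨le_rfl, hT.le⟩)
  have hpow (k : ℕ) : f (k * T) = f T ^ k := by
    induction k with
    | zero => simp [h0]
    | succ k ih => rw [Nat.cast_succ, add_one_mul, hadd _ _ (by positivity) hT.le, ih, pow_succ]
  set ν := -Real.log ρ / T
  refine ⟨ν, div_pos (neg_pos.2 hlogρ) hT, .of_bound (M / ρ) ?_⟩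
  filter_upwards [eventually_ge_atTop 0] with t ht
  obtain ⟨k, hkt, hk⟩ : ∃ k : ℕ, k * T ≤ t ∧ t < k * T + T := by
    refine ⟨⌊t / T⌋₊, (le_div_iff₀ hT).1 (Nat.floor_le (by positivity)), ?_⟩
    rw [← add_one_mul, ← div_lt_iff₀ hT]
    exact Nat.lt_floor_add_one _
  have hfρ : ‖f t‖ ≤ M * ρ ^ k := by
    rcases k.eq_zero_or_pos with rfl | hk0
    · simpa using hM t ⟨ht, by simp at hk; linarith⟩
    calc ‖f t‖ = ‖f (t - k * T) * f T ^ k‖ := by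
          rw [← hpow, ← hadd _ _ (by linarith) (by positivity), sub_add_cancel]
      _ ≤ M * ρ ^ k := (norm_mul_le _ _).trans <| mul_le_mul (hM _ ⟨by linarith, by linarith⟩)
          ((norm_pow_le' _ hk0).trans (pow_le_pow_left₀ (norm_nonneg _) (le_max_left _ _) k))
          (norm_nonneg _) hM0
  have hρk : ρ ^ k ≤ ρ⁻¹ * Real.exp (-ν * t) := by
    rw [← Real.exp_log hρ0, ← Real.exp_nat_mul, ← Real.exp_neg, ← Real.exp_add]
    refine Real.exp_le_exp.2 ?_
    have key : Real.log ρ * (k * T + T - t) ≤ 0 :=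
      mul_nonpos_of_nonpos_of_nonneg hlogρ.le (by linarith)
    simp only [ν]
    field_simp
    nlinarith
  calc ‖f t‖ ≤ M * (ρ⁻¹ * Real.exp (-ν * t)) := hfρ.trans (by gcongr)
    _ = M / ρ * ‖Real.exp (-ν * t)‖ := by
        rw [Real.norm_eq_abs, abs_of_pos (Real.exp_pos _)]; ring

section ComplexBanachAlgebra

variable {𝔸 : Type*} [NormedRing 𝔸] [NormedAlgebra ℂ 𝔸] [CompleteSpace 𝔸]

theorem spectrum.exists_norm_pow_lt_one_of_spectralRadius_lt_one {x : 𝔸}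
    (hx : spectralRadius ℂ x < 1) : ∃ N : ℕ, 0 < N ∧ ‖x ^ N‖ < 1 := by
  obtain ⟨N, hN⟩ := ((spectrum.pow_norm_pow_one_div_tendsto_nhds_spectralRadius x).eventually
    (gt_mem_nhds hx)).exists_forall_of_atTop
  refine ⟨N + 1, N.succ_pos, ?_⟩
  have h := hN (N + 1) N.le_succ
  rw [ENNReal.ofReal_lt_one] at h
  by_contra! h1
  exact h.not_ge (Real.one_le_rpow h1 (by positivity))

theorem exists_isBigO_exp_smul_of_spectralRadius_exp_lt_one {a : 𝔸}
    (ha : spectralRadius ℂ (exp a) < 1) :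
    ∃ ν > 0, (fun t : ℝ => exp ((t : ℂ) • a)) =O[atTop] fun t => Real.exp (-ν * t) := by
  let _ : NormedAlgebra ℚ 𝔸 := .restrictScalars ℚ ℂ 𝔸
  obtain ⟨N, hN, hNa⟩ := spectrum.exists_norm_pow_lt_one_of_spectralRadius_lt_one ha
  refine exists_isBigO_exp_neg_of_map_add_eq_mul (T := N) ?_ (by simp) (fun s t _ _ => ?_)
    (by exact_mod_cast hN) ?_
  · exact (exp_continuous.comp (Complex.continuous_ofReal.smul continuous_const)).continuousOn
  · rw [Complex.ofReal_add, add_smul,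
      NormedSpace.exp_add_of_commute (((Commute.refl a).smul_left _).smul_right _)]
  · rwa [Complex.ofReal_natCast, Nat.cast_smul_eq_nsmul, NormedSpace.exp_nsmul]

end ComplexBanachAlgebra

theorem integrableOn_Ioi_of_isBigO_exp_neg {E : Type*} [NormedAddCommGroup E] {f : ℝ → E}
    {a b : ℝ} (hb : 0 < b) (hf : ContinuousOn f (Ici a))
    (ho : f =O[atTop] fun x => Real.exp (-b * x)) : IntegrableOn f (Ioi a) :=
  integrableOn_Ici_iff_integrableOn_Ioi (by finiteness) |>.mp <|
    (hf.locallyIntegrableOn measurableSet_Ici).integrableOn_of_isBigO_atTop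
    ho ⟨Ioi b, Ioi_mem_atTop b, exp_neg_integrableOn_Ioi b hb⟩

section Sylvester

variable {𝔸 : Type*} [NormedRing 𝔸] [NormedAlgebra ℝ 𝔸]

theorem isBigO_exp_smul_mul_mul_exp_smul {a b : 𝔸} {ν : ℝ}
    (ha : (fun t : ℝ => exp (t • a)) =O[atTop] fun t => Real.exp (-ν * t))
    (hb : (fun t : ℝ => exp (t • b)) =O[atTop] fun t => Real.exp (-ν * t)) (y : 𝔸) :
    (fun t : ℝ => exp (t • a) * y * exp (t • b)) =O[atTop] fun t => Real.exp (-(2 * ν) * t) := by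
  refine ((ha.mul (isBigO_const_const y one_ne_zero atTop)).mul hb).congr_right fun t => ?_
  rw [mul_one, ← Real.exp_add]
  ring_nf

theorem tendsto_exp_smul_mul_mul_exp_smul {a b : 𝔸} {ν : ℝ} (hν : 0 < ν)
    (ha : (fun t : ℝ => exp (t • a)) =O[atTop] fun t => Real.exp (-ν * t))
    (hb : (fun t : ℝ => exp (t • b)) =O[atTop] fun t => Real.exp (-ν * t)) (y : 𝔸) :
    Tendsto (fun t : ℝ => exp (t • a) * y * exp (t • b)) atTop (𝓝 0) :=
  (isBigO_exp_smul_mul_mul_exp_smul ha hb y).trans_tendsto <| Real.tendsto_exp_atBot.comp <|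
    tendsto_id.const_mul_atTop_of_neg (by linarith)

variable [CompleteSpace 𝔸]

theorem hasDerivAt_exp_smul_mul_mul_exp_smul (a b y : 𝔸) (t : ℝ) :
    HasDerivAt (fun t : ℝ => exp (t • a) * y * exp (t • b))
      (a * (exp (t • a) * y * exp (t • b)) + exp (t • a) * y * exp (t • b) * b) t := by
  refine (((hasDerivAt_exp_smul_const' a t).mul_const y).mul
    (hasDerivAt_exp_smul_const b t)).congr_deriv ?_
  noncomm_ring

theorem integrableOn_exp_smul_mul_mul_exp_smul {a b : 𝔸} {ν : ℝ} (hν : 0 < ν)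
    (ha : (fun t : ℝ => exp (t • a)) =O[atTop] fun t => Real.exp (-ν * t))
    (hb : (fun t : ℝ => exp (t • b)) =O[atTop] fun t => Real.exp (-ν * t)) (y : 𝔸) :
    IntegrableOn (fun t : ℝ => exp (t • a) * y * exp (t • b)) (Ioi 0) :=
  integrableOn_Ioi_of_isBigO_exp_neg (by positivity)
    (fun t _ => (hasDerivAt_exp_smul_mul_mul_exp_smul a b y t).continuousAt.continuousWithinAt)
    (isBigO_exp_smul_mul_mul_exp_smul ha hb y)

theorem sylvester_setIntegral {a b : 𝔸} {ν : ℝ} (hν : 0 < ν)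
    (ha : (fun t : ℝ => exp (t • a)) =O[atTop] fun t => Real.exp (-ν * t))
    (hb : (fun t : ℝ => exp (t • b)) =O[atTop] fun t => Real.exp (-ν * t)) (y : 𝔸) :
    a * (∫ t in Ioi (0 : ℝ), exp (t • a) * y * exp (t • b)) +
      (∫ t in Ioi (0 : ℝ), exp (t • a) * y * exp (t • b)) * b = -y := by
  have hg := integrableOn_exp_smul_mul_mul_exp_smul hν ha hb y
  have hFTC := integral_Ioi_of_hasDerivAt_of_tendsto'
    (fun t _ => hasDerivAt_exp_smul_mul_mul_exp_smul a b y t)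
    ((hg.const_mul a).add (hg.mul_const b)) (tendsto_exp_smul_mul_mul_exp_smul hν ha hb y)
  rw [integral_add (hg.const_mul a) (hg.mul_const b), integral_const_mul_of_integrable hg,
    integral_mul_const_of_integrable hg] at hFTC
  simpa using hFTC

theorem sylvester_eq_zero {a b : 𝔸} {ν : ℝ} (hν : 0 < ν)
    (ha : (fun t : ℝ => exp (t • a)) =O[atTop] fun t => Real.exp (-ν * t))
    (hb : (fun t : ℝ => exp (t • b)) =O[atTop] fun t => Real.exp (-ν * t)) {d : 𝔸}
    (hd : a * d + d * b = 0) : d = 0 := by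
  have hderiv (t : ℝ) : HasDerivAt (fun t : ℝ => exp (t • a) * d * exp (t • b)) 0 t := by
    convert hasDerivAt_exp_smul_mul_mul_exp_smul a b d t using 1
    have hca : a * exp (t • a) = exp (t • a) * a := ((Commute.refl a).smul_right t).exp_right.eq
    have hcb : exp (t • b) * b = b * exp (t • b) := ((Commute.refl b).smul_left t).exp_left.eq
    calc (0 : 𝔸) = exp (t • a) * (a * d + d * b) * exp (t • b) := by rw [hd, mul_zero, zero_mul]
      _ = _ := by simp only [← mul_assoc, hca, mul_add, add_mul]; simp only [mul_assoc, hcb]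
  have hconst : (fun t : ℝ => exp (t • a) * d * exp (t • b)) = fun _ => d := by
    ext t
    rw [is_const_of_deriv_eq_zero (fun s => (hderiv s).differentiableAt)
      (fun s => (hderiv s).deriv) t 0]
    simp
  have hlim := tendsto_exp_smul_mul_mul_exp_smul hν ha hb d
  rw [hconst] at hlim
  exact tendsto_nhds_unique tendsto_const_nhds hlim

theorem sylvester_injective {a b : 𝔸} {ν : ℝ} (hν : 0 < ν)
    (ha : (fun t : ℝ => exp (t • a)) =O[atTop] fun t => Real.exp (-ν * t))
    (hb : (fun t : ℝ => exp (t • b)) =O[atTop] fun t => Real.exp (-ν * t)) :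
    Function.Injective fun x => a * x + x * b := fun x₁ x₂ h =>
  sub_eq_zero.1 <| sylvester_eq_zero hν ha hb <| by
    rw [mul_sub, sub_mul, sub_add_sub_comm, sub_eq_zero]
    exact h

end Sylvester

theorem Module.End.exists_hasEigenvector_of_commute {K V : Type*} [Field K] [IsAlgClosed K]
    [AddCommGroup V] [Module K V] [FiniteDimensional K V] {f g : Module.End K V}
    (h : Commute f g) {l : K} (hl : f.HasEigenvalue l) :
    ∃ μ v, f.HasEigenvector l v ∧ g.HasEigenvector μ v := by
  have hg : ∀ v ∈ f.eigenspace l, g v ∈ f.eigenspace l :=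
    fun v hv => Module.End.mapsTo_genEigenspace_of_comm h l 1 hv
  have : Nontrivial (f.eigenspace l) := Submodule.nontrivial_iff_ne_bot.2 hl
  obtain ⟨μ, hμ⟩ := Module.End.exists_eigenvalue (g.restrict hg)
  obtain ⟨w, hw⟩ := hμ.exists_hasEigenvector
  have hw0 : (w : V) ≠ 0 := by simpa using hw.2
  exact ⟨μ, w, ⟨w.2, hw0⟩,
    ⟨Module.End.eigenspace_restrict_le_eigenspace g hg μ ⟨w, hw.1, rfl⟩, hw0⟩⟩

open Matrix

theorem Matrix.isSymm_of_mul_add_mul_transpose_eq_neg {m R : Type*} [Fintype m] [CommRing R]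
    {A X Y : Matrix m m R} (hinj : Function.Injective fun X : Matrix m m R => A * X + X * Aᵀ)
    (hY : Y.IsSymm) (hX : A * X + X * Aᵀ = -Y) : X.IsSymm := by
  refine hinj ?_
  calc A * Xᵀ + Xᵀ * Aᵀ = (A * X + X * Aᵀ)ᵀ := by
        rw [transpose_add, transpose_mul, transpose_mul, transpose_transpose, add_comm]
    _ = A * X + X * Aᵀ := by rw [hX, transpose_neg, hY.eq]

-- The Frobenius norm makes matrices a Banach algebra in which `transpose` and `map ofReal` are
-- isometries.
section Frobenius

open scoped Matrix.Norms.Frobenius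

variable {m : Type*} [Fintype m] [DecidableEq m]

theorem Matrix.exp_mulVec_of_mulVec_eq_smul {𝕂 : Type*} [RCLike 𝕂] {B : Matrix m m 𝕂} {μ : 𝕂}
    {v : m → 𝕂} (h : B *ᵥ v = μ • v) : exp B *ᵥ v = exp μ • v := by
  have hpow (k : ℕ) : B ^ k *ᵥ v = μ ^ k • v := by
    induction k with
    | zero => simp
    | succ k ih => rw [pow_succ', ← mulVec_mulVec, ih, mulVec_smul, h, smul_smul, pow_succ]
  have hB := (exp_series_hasSum_exp' (𝕂 := 𝕂) B).map (mulVec.addMonoidHomLeft v)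
    (continuous_id.matrix_mulVec continuous_const)
  refine hB.unique ?_
  convert (exp_series_hasSum_exp' (𝕂 := 𝕂) μ).smul_const v using 1
  ext1 k
  simp [mulVec.addMonoidHomLeft, smul_mulVec, hpow, smul_smul]

theorem Matrix.spectrum_exp_subset (B : Matrix m m ℂ) :
    spectrum ℂ (exp B) ⊆ Complex.exp '' spectrum ℂ B := by
  intro l hl
  rw [← AlgEquiv.spectrum_eq toLinAlgEquiv', ← Module.End.hasEigenvalue_iff_mem_spectrum] at hl
  have hcomm := (Commute.refl B).exp_left.map (toLinAlgEquiv' (R := ℂ) (n := m))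
  obtain ⟨μ, v, hl, hμ⟩ := Module.End.exists_hasEigenvector_of_commute hcomm hl
  refine ⟨μ, ?_, ?_⟩
  · rw [← AlgEquiv.spectrum_eq toLinAlgEquiv', ← Module.End.hasEigenvalue_iff_mem_spectrum]
    exact Module.End.hasEigenvalue_of_hasEigenvector hμ
  · have h1 := exp_mulVec_of_mulVec_eq_smul (by simpa using hμ.apply_eq_smul)
    have h2 : exp B *ᵥ v = l • v := by simpa using hl.apply_eq_smul
    rw [← Complex.exp_eq_exp_ℂ] at h1
    exact smul_left_injective ℂ hl.2 (h1.symm.trans h2)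

theorem Matrix.spectralRadius_exp_lt_one {B : Matrix m m ℂ}
    (hB : ∀ μ ∈ spectrum ℂ B, μ.re < 0) : spectralRadius ℂ (exp B) < 1 := by
  rcases (spectrum ℂ (exp B)).eq_empty_or_nonempty with h | h
  · simp [spectralRadius, h]
  refine ENNReal.coe_one ▸ spectrum.spectralRadius_lt_of_forall_lt_of_nonempty h fun z hz => ?_
  obtain ⟨μ, hμ, rfl⟩ := spectrum_exp_subset B hz
  rw [← NNReal.coe_lt_coe, coe_nnnorm, Complex.norm_exp, NNReal.coe_one, Real.exp_lt_one_iff]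
  exact hB μ hμ

theorem Matrix.exists_isBigO_exp_smul {A : Matrix m m ℝ}
    (hA : ∀ μ ∈ spectrum ℂ (A.map (Complex.ofReal ·)), μ.re < 0) :
    ∃ ν > 0, (fun t : ℝ => exp (t • A)) =O[atTop] fun t => Real.exp (-ν * t) := by
  have hρ := spectralRadius_exp_lt_one hA
  obtain ⟨ν, hν, h⟩ := exists_isBigO_exp_smul_of_spectralRadius_exp_lt_one hρ
  have hnorm (t : ℝ) : ‖exp ((t : ℂ) • A.map (Complex.ofReal ·))‖ = ‖exp (t • A)‖ := by
    let _ : NormedAlgebra ℚ (Matrix m m ℝ) := .restrictScalars ℚ ℝ _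
    have hmap := map_exp (Complex.ofRealHom.mapMatrix (m := m))
      (continuous_id.matrix_map Complex.continuous_ofReal) (t • A)
    have hsmul : (t : ℂ) • A.map (Complex.ofReal ·) = (t • A).map (Complex.ofReal ·) := by
      ext; simp
    rw [← frobenius_norm_map_eq (exp (t • A)) _ Complex.norm_real, hsmul]
    exact congrArg norm hmap.symm
  exact ⟨ν, hν, isBigO_norm_left.1 (h.norm_left.congr_left hnorm)⟩

theorem Matrix.isBigO_exp_smul_transpose {𝕂 : Type*} [RCLike 𝕂] {A : Matrix m m 𝕂}
    {l : Filter ℝ} {g : ℝ → ℝ} (h : (fun t : ℝ => exp (t • A)) =O[l] g) :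
    (fun t : ℝ => exp (t • Aᵀ)) =O[l] g := by
  refine isBigO_norm_left.1 ((isBigO_norm_left.2 h).congr_left fun t => ?_)
  rw [← transpose_smul, exp_transpose, frobenius_norm_transpose]

theorem Matrix.lyapunov_injective {A : Matrix m m ℝ}
    (hA : ∀ μ ∈ spectrum ℂ (A.map (Complex.ofReal ·)), μ.re < 0) :
    Function.Injective fun X : Matrix m m ℝ => A * X + X * Aᵀ := by
  obtain ⟨ν, hν, h⟩ := exists_isBigO_exp_smul hA
  exact sylvester_injective hν h (isBigO_exp_smul_transpose h)

theorem Matrix.lyapunov_setIntegral {A : Matrix m m ℝ}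
    (hA : ∀ μ ∈ spectrum ℂ (A.map (Complex.ofReal ·)), μ.re < 0) (Y : Matrix m m ℝ) :
    A * (∫ t in Ioi (0 : ℝ), exp (t • A) * Y * exp (t • Aᵀ)) +
      (∫ t in Ioi (0 : ℝ), exp (t • A) * Y * exp (t • Aᵀ)) * Aᵀ = -Y := by
  obtain ⟨ν, hν, h⟩ := exists_isBigO_exp_smul hA
  exact sylvester_setIntegral hν h (isBigO_exp_smul_transpose h) Y

theorem Matrix.PosSemidef.lyapunov_setIntegral {A : Matrix m m ℝ}
    (hA : ∀ μ ∈ spectrum ℂ (A.map (Complex.ofReal ·)), μ.re < 0) {Y : Matrix m m ℝ}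
    (hY : Y.PosSemidef) :
    (∫ t in Ioi (0 : ℝ), exp (t • A) * Y * exp (t • Aᵀ)).PosSemidef := by
  obtain ⟨ν, hν, h⟩ := exists_isBigO_exp_smul hA
  have hg := integrableOn_exp_smul_mul_mul_exp_smul hν h (isBigO_exp_smul_transpose h) Y
  have hsymm := isSymm_of_mul_add_mul_transpose_eq_neg (lyapunov_injective hA)
    (isHermitian_iff_isSymm.1 hY.isHermitian) (Matrix.lyapunov_setIntegral hA Y)
  refine posSemidef_iff_dotProduct_mulVec.2 ⟨isHermitian_iff_isSymm.2 hsymm, fun x => ?_⟩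
  let q : Matrix m m ℝ →L[ℝ] ℝ := LinearMap.toContinuousLinearMap
    { toFun := fun M => star x ⬝ᵥ M *ᵥ x
      map_add' := fun M N => by simp [add_mulVec, dotProduct_add]
      map_smul' := fun c M => by simp [smul_mulVec, dotProduct_smul] }
  change 0 ≤ q (∫ t in Ioi (0 : ℝ), exp (t • A) * Y * exp (t • Aᵀ))
  refine (setIntegral_nonneg measurableSet_Ioi fun t _ => ?_).trans_eq (q.integral_comp_comm hg)
  have hgt := hY.mul_mul_conjTranspose_same (exp (t • A))
  rw [conjTranspose_eq_transpose_of_trivial, ← exp_transpose, transpose_smul] at hgt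
  exact hgt.dotProduct_mulVec_nonneg x

end Frobenius

-- The Bochner integral only depends on the topological vector space structure, so the
-- entrywise sup norm of the statement and the Frobenius norm give the same integral.
theorem Matrix.integral_eq_integral_frobenius {m n : Type*} [Fintype m] [Fintype n] {α : Type*}
    [MeasurableSpace α] {μ : Measure α} (f : α → Matrix m n ℝ) :
    @integral α (Matrix m n ℝ) Matrix.normedAddCommGroup Matrix.normedSpace _ μ f =
      @integral α (Matrix m n ℝ) Matrix.frobeniusNormedAddCommGroup Matrix.frobeniusNormedSpace
        _ μ f :=
  @ContinuousLinearEquiv.integral_comp_comm α (Matrix m n ℝ) (Matrix m n ℝ) _ μ ℝ _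
    Matrix.frobeniusNormedAddCommGroup Matrix.frobeniusNormedSpace Matrix.normedAddCommGroup
    Matrix.normedSpace Matrix.normedSpace Matrix.frobeniusNormedSpace
    (ContinuousLinearEquiv.refl ℝ (Matrix m n ℝ)) f

attribute [local instance] Matrix.normedAddCommGroup Matrix.normedSpace

theorem stmt2 {n : ℕ} (A : Matrix (Fin n) (Fin n) ℝ)
    (hA : ∀ μ ∈ spectrum ℂ (A.map (Complex.ofReal ·)), μ.re < 0) :
    (∀ Y : Matrix (Fin n) (Fin n) ℝ, Y.IsSymm →
        ∃! X : Matrix (Fin n) (Fin n) ℝ, X.IsSymm ∧ A * X + X * Aᵀ = -Y) ∧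
      ∀ Y : Matrix (Fin n) (Fin n) ℝ, Y.PosSemidef →
        ∃! X : Matrix (Fin n) (Fin n) ℝ, X.PosSemidef ∧ A * X + X * Aᵀ = -Y ∧
          X = ∫ t in Set.Ioi (0 : ℝ),
                NormedSpace.exp (t • A) * Y * NormedSpace.exp (t • Aᵀ) := by
  let X (Y : Matrix (Fin n) (Fin n) ℝ) := ∫ t in Ioi (0 : ℝ), exp (t • A) * Y * exp (t • Aᵀ)
  have hinj := lyapunov_injective hA
  have hsol (Y : Matrix (Fin n) (Fin n) ℝ) : A * X Y + X Y * Aᵀ = -Y := by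
    simp only [X]
    rw [integral_eq_integral_frobenius]
    exact lyapunov_setIntegral hA Y
  have hpsd {Y : Matrix (Fin n) (Fin n) ℝ} (hY : Y.PosSemidef) : (X Y).PosSemidef := by
    simp only [X]
    rw [integral_eq_integral_frobenius]
    exact hY.lyapunov_setIntegral hA
  refine ⟨fun Y hY => ⟨X Y, ⟨isSymm_of_mul_add_mul_transpose_eq_neg hinj hY (hsol Y), hsol Y⟩,
      fun X' hX' => hinj (hX'.2.trans (hsol Y).symm)⟩,
    fun Y hY => ⟨X Y, ⟨hpsd hY, hsol Y, rfl⟩, fun X' hX' => hX'.2.2⟩⟩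
end

section
/- Let L be an invertible resolvent-positive operator (or more concretely: suppose -L⁻¹ maps the cone of positive semidefinite tuples to itself) and Π a positive operator with ρ(L⁻¹Π) < 1. Then the unique solution X of (L + Π)(X) = -Y with Y in the positive cone also lies in the positive cone. -/
open TensorProduct Matrix

/-- `ρ(T) < 1`: every element of the (complex) spectrum of the complexification of the
real linear operator `T` has modulus less than one. -/
def SpecRadiusLtOne {V : Type*} [AddCommGroup V] [Module ℝ V] (T : V →ₗ[ℝ] V) : Prop :=
  ∀ μ ∈ spectrum ℂ (LinearMap.baseChange ℂ T : Module.End ℂ (ℂ ⊗[ℝ] V)), ‖μ‖ < 1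

/-- The positive cone: tuples of positive semidefinite matrices. -/
def PosTuple {n N : ℕ} (X : Fin N → Matrix (Fin n) (Fin n) ℝ) : Prop :=
  ∀ i, (X i).PosSemidef

/-!
Put `B = -L⁻¹Π`. Then `(L + Π) X = W` is the fixed-point equation `X = L⁻¹ W + B X`. The operator
`B` preserves the positive cone, and `ρ(B) < 1` gives `Bᵐ x → 0` by Gelfand's formula. Hence a
fixed point of `B` vanishes, so `L + Π` is injective and therefore bijective. For `W = -Y`, the
solution `X` is the limit of the Neumann partial sums `∑_{k<m} Bᵏ Z` with `Z = -L⁻¹ Y`. Each of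
these sums lies in the closed cone.
-/

open Filter Topology

theorem tendsto_pow_atTop_nhds_zero_of_spectralRadius_lt_one {A : Type*} [NormedRing A]
    [NormedAlgebra ℂ A] [CompleteSpace A] {a : A} (ha : spectralRadius ℂ a < 1) :
    Tendsto (a ^ ·) atTop (𝓝 0) := by
  obtain ⟨r, hr, hr1⟩ := exists_between ha
  have hroot : ∀ᶠ m : ℕ in atTop, (‖a ^ m‖₊ : ENNReal) ^ (1 / (m : ℝ)) < r :=
    (spectrum.pow_nnnorm_pow_one_div_tendsto_nhds_spectralRadius a).eventually_lt_const hr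
  have hgeom : ∀ᶠ m : ℕ in atTop, (‖a ^ m‖₊ : ENNReal) ≤ r ^ m := by
    filter_upwards [hroot, eventually_ne_atTop 0] with m hm hm0
    calc (‖a ^ m‖₊ : ENNReal) = ((‖a ^ m‖₊ : ENNReal) ^ (1 / (m : ℝ))) ^ (m : ℝ) := by
          rw [← ENNReal.rpow_mul, one_div_mul_cancel (Nat.cast_ne_zero.2 hm0), ENNReal.rpow_one]
      _ ≤ r ^ (m : ℝ) := ENNReal.rpow_le_rpow hm.le (Nat.cast_nonneg m)
      _ = r ^ m := ENNReal.rpow_natCast r m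
  have hnorm : Tendsto (fun m : ℕ => (‖a ^ m‖₊ : ENNReal)) atTop (𝓝 0) :=
    tendsto_of_tendsto_of_tendsto_of_le_of_le' tendsto_const_nhds
      (ENNReal.tendsto_pow_atTop_nhds_zero_of_lt_one hr1) (.of_forall fun _ => zero_le) hgeom
  rw [← ENNReal.coe_zero, ENNReal.tendsto_coe] at hnorm
  exact tendsto_zero_iff_norm_tendsto_zero.2 (NNReal.tendsto_coe.2 hnorm)

theorem tendsto_pow_atTop_nhds_zero_of_forall_spectrum_norm_lt_one {A : Type*} [NormedRing A]
    [NormedAlgebra ℂ A] [CompleteSpace A] {a : A} (ha : ∀ μ ∈ spectrum ℂ a, ‖μ‖ < 1) :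
    Tendsto (a ^ ·) atTop (𝓝 0) := by
  obtain hA | hA := subsingleton_or_nontrivial A
  · simp [Subsingleton.elim _ (0 : A)]
  refine tendsto_pow_atTop_nhds_zero_of_spectralRadius_lt_one ?_
  simpa using spectrum.spectralRadius_lt_of_forall_lt a (r := 1) fun μ hμ => by
    simpa [← NNReal.coe_lt_coe] using ha μ hμ

theorem Matrix.tendsto_pow_atTop_nhds_zero_of_forall_spectrum_norm_lt_one {ι : Type*} [Fintype ι]
    [DecidableEq ι] {A : Matrix ι ι ℂ} (hA : ∀ μ ∈ spectrum ℂ A, ‖μ‖ < 1) :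
    Tendsto (A ^ ·) atTop (𝓝 0) :=
  -- the `ℓ∞` operator norm induces the product topology, so Gelfand's formula transfers
  letI := Matrix.linftyOpNormedRing (n := ι) (α := ℂ)
  letI := Matrix.linftyOpNormedAlgebra (n := ι) (α := ℂ) (R := ℂ)
  _root_.tendsto_pow_atTop_nhds_zero_of_forall_spectrum_norm_lt_one hA

theorem Matrix.tendsto_pow_atTop_nhds_zero_of_forall_spectrum_map_norm_lt_one {ι : Type*}
    [Fintype ι] [DecidableEq ι] {M : Matrix ι ι ℝ}
    (hM : ∀ μ ∈ spectrum ℂ (M.map (algebraMap ℝ ℂ)), ‖μ‖ < 1) :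
    Tendsto (M ^ ·) atTop (𝓝 0) := by
  have hre : Continuous fun A : Matrix ι ι ℂ => A.map Complex.re :=
    continuous_id.matrix_map Complex.continuous_re
  convert (hre.tendsto 0).comp
    (tendsto_pow_atTop_nhds_zero_of_forall_spectrum_norm_lt_one hM) using 2
  · rename_i m
    have hmap : M.map Complex.ofReal ^ m = (M ^ m).map Complex.ofReal :=
      (map_pow Complex.ofRealHom.mapMatrix M m).symm
    simp [hmap, Function.comp_def]
  · simp

theorem LinearMap.spectrum_baseChange {R A M ι : Type*} [CommRing R] [CommRing A]
    [Algebra R A] [AddCommGroup M] [Module R M] [Fintype ι] [DecidableEq ι]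
    (b : Module.Basis ι R M) (f : Module.End R M) :
    spectrum A (f.baseChange A) = spectrum A ((toMatrix b b f).map (algebraMap R A)) := by
  rw [← toMatrix_baseChange, spectrum_toMatrix]

theorem SpecRadiusLtOne.tendsto_pow_apply {V : Type*} [AddCommGroup V] [Module ℝ V]
    [FiniteDimensional ℝ V] [TopologicalSpace V] [IsTopologicalAddGroup V] [ContinuousSMul ℝ V]
    {T : V →ₗ[ℝ] V} (hT : SpecRadiusLtOne T) (x : V) :
    Tendsto (fun m => (T ^ m) x) atTop (𝓝 0) := by
  let b := Module.finBasis ℝ V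
  have hM : Tendsto (LinearMap.toMatrix b b T ^ ·) atTop (𝓝 0) :=
    Matrix.tendsto_pow_atTop_nhds_zero_of_forall_spectrum_map_norm_lt_one fun μ hμ =>
      hT μ (by rwa [LinearMap.spectrum_baseChange b])
  have hcont : Continuous fun M => Matrix.toLin b b M x :=
    (LinearMap.applyₗ x ∘ₗ (Matrix.toLin b b).toLinearMap).continuous_of_finiteDimensional
  convert (hcont.tendsto 0).comp hM using 1
  · ext m; simp
  · simp

theorem SpecRadiusLtOne.neg {V : Type*} [AddCommGroup V] [Module ℝ V] {T : V →ₗ[ℝ] V}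
    (hT : SpecRadiusLtOne T) : SpecRadiusLtOne (-T) := by
  intro μ hμ
  rw [LinearMap.baseChange_neg, ← spectrum.neg_eq, Set.mem_neg] at hμ
  simpa using hT (-μ) hμ

section FixedPoint

variable {R V : Type*} [Semiring R] [AddCommGroup V] [Module R V] {B : Module.End R V}

theorem eq_sum_range_add_pow_apply {x z : V} (hx : x = z + B x) (m : ℕ) :
    x = ∑ k ∈ Finset.range m, (B ^ k) z + (B ^ m) x := by
  induction m with
  | zero => simp
  | succ m ih =>
    conv_lhs => rw [ih, hx, map_add, ← Module.End.mul_apply, ← pow_succ]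
    rw [Finset.sum_range_succ, add_assoc]

variable [TopologicalSpace V]

theorem eq_zero_of_apply_eq_self_of_tendsto_pow [T2Space V] {x : V} (hx : B x = x)
    (hB : Tendsto (fun m => (B ^ m) x) atTop (𝓝 0)) : x = 0 := by
  have hfix (m : ℕ) : (B ^ m) x = x := by
    rw [Module.End.pow_apply]; exact Function.iterate_fixed hx m
  exact tendsto_nhds_unique (hB.congr hfix) tendsto_const_nhds |>.symm

theorem mem_of_eq_add_apply_of_tendsto_pow [IsTopologicalAddGroup V] {C : AddSubmonoid V}
    (hC : IsClosed (C : Set V)) (hBC : ∀ y ∈ C, B y ∈ C) {x z : V} (hz : z ∈ C)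
    (hx : x = z + B x) (hB : Tendsto (fun m => (B ^ m) x) atTop (𝓝 0)) : x ∈ C := by
  have hpow (k : ℕ) : (B ^ k) z ∈ C := by
    induction k with
    | zero => simpa using hz
    | succ k ih => rw [pow_succ', Module.End.mul_apply]; exact hBC _ ih
  have hsum : Tendsto (fun m => ∑ k ∈ Finset.range m, (B ^ k) z) atTop (𝓝 x) := by
    simpa using (tendsto_const_nhds (x := x)).sub hB |>.congr fun m =>
      eq_sub_of_add_eq (eq_sum_range_add_pow_apply hx m).symm |>.symm
  exact hC.mem_of_tendsto hsum (.of_forall fun m => C.sum_mem fun k _ => hpow k)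

end FixedPoint

open scoped ComplexOrder in
theorem Matrix.isClosed_setOf_posSemidef {𝕜 ι : Type*} [RCLike 𝕜] [Fintype ι] :
    IsClosed {M : Matrix ι ι 𝕜 | M.PosSemidef} := by
  have : {M : Matrix ι ι 𝕜 | M.PosSemidef} =
      {M | Mᴴ = M} ∩ ⋂ v : ι → 𝕜, {M | 0 ≤ star v ⬝ᵥ M *ᵥ v} := by
    ext M
    simp [posSemidef_iff_dotProduct_mulVec, IsHermitian]
  rw [this]
  refine (isClosed_eq (by fun_prop) continuous_id).inter (isClosed_iInter fun v => ?_)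
  exact isClosed_le continuous_const (by fun_prop)

def posTupleCone (n N : ℕ) : AddSubmonoid (Fin N → Matrix (Fin n) (Fin n) ℝ) where
  carrier := {X | PosTuple X}
  add_mem' hX hY i := (hX i).add (hY i)
  zero_mem' _ := Matrix.PosSemidef.zero

theorem isClosed_posTupleCone (n N : ℕ) :
    IsClosed (posTupleCone n N : Set (Fin N → Matrix (Fin n) (Fin n) ℝ)) := by
  change IsClosed {X : Fin N → Matrix (Fin n) (Fin n) ℝ | ∀ i, (X i).PosSemidef}
  rw [Set.ofPred_forall]
  exact isClosed_iInter fun i => Matrix.isClosed_setOf_posSemidef.preimage (continuous_apply i :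
    Continuous fun X : Fin N → Matrix (Fin n) (Fin n) ℝ => X i)

theorem stmt4 {n N : ℕ}
    (L P : (Fin N → Matrix (Fin n) (Fin n) ℝ) →ₗ[ℝ] (Fin N → Matrix (Fin n) (Fin n) ℝ))
    (hL : Function.Bijective L)
    (hLinv : ∀ X, PosTuple X → PosTuple (-(LinearEquiv.ofBijective L hL).symm X))
    (hP : ∀ X, PosTuple X → PosTuple (P X))
    (hρ : SpecRadiusLtOne ((LinearEquiv.ofBijective L hL).symm.toLinearMap ∘ₗ P))
    (Y : Fin N → Matrix (Fin n) (Fin n) ℝ) (hY : PosTuple Y) :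
    (∃! X, (L + P) X = -Y) ∧ ∀ X, (L + P) X = -Y → PosTuple X := by
  set e := LinearEquiv.ofBijective L hL
  set B := -(e.symm.toLinearMap ∘ₗ P)
  have hB := hρ.neg.tendsto_pow_apply
  have hsolve (X W) : (L + P) X = W ↔ X = e.symm W + B X := by
    change e X + P X = W ↔ _
    rw [← eq_sub_iff_add_eq, ← e.eq_symm_apply, map_sub, sub_eq_add_neg]
    rfl
  have hinj : Function.Injective (L + P) := (injective_iff_map_eq_zero _).2 fun X hX => by
    rw [hsolve, map_zero, zero_add] at hX
    exact eq_zero_of_apply_eq_self_of_tendsto_pow hX.symm (hB X)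
  refine ⟨Function.Bijective.existsUnique ⟨hinj, LinearMap.injective_iff_surjective.1 hinj⟩ (-Y),
    fun X hX => ?_⟩
  refine mem_of_eq_add_apply_of_tendsto_pow (isClosed_posTupleCone n N)
    (fun X hX => hLinv _ (hP X hX)) ?_ ((hsolve X _).1 hX) (hB X)
  rw [map_neg]
  exact hLinv Y hY
end

section
/- If there exists an N-tuple X of positive definite symmetric matrices such that A_i X_i + X_i A_i^T + Σ_{j=1}^N γ_{ij} X_j is negative definite for every i, then each matrix A_i + (γ_{ii}/2) I has all eigenvalues with negative real part. -/
/-!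
The off-diagonal terms `γ i j • X j` are positive semidefinite, so dropping them preserves
negativity: with `B = A i + (γ i i / 2) • 1` one gets `B * X i + X i * Bᵀ ≺ 0`. This is a Lyapunov
inequality. Passing to `ℂ`, if `u ≠ 0` is a left eigenvector, `uᴴ B = μ uᴴ`, then
`uᴴ (B X i + X i Bᴴ) u = 2 Re μ · uᴴ (X i) u`, with the left side negative and `uᴴ (X i) u`
positive.
-/

open Matrix
open scoped ComplexOrder

section

variable {n : Type*} [Fintype n]

theorem Matrix.exists_vecMul_eq_smul_of_mem_spectrum {K : Type*} [Field K] [DecidableEq n]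
    {B : Matrix n n K} {μ : K} (hμ : μ ∈ spectrum K B) : ∃ w ≠ 0, w ᵥ* B = μ • w := by
  have hdet : (algebraMap K (Matrix n n K) μ - B).det = 0 := by
    rw [spectrum.mem_iff, isUnit_iff_isUnit_det, isUnit_iff_ne_zero, not_not] at hμ
    exact hμ
  obtain ⟨w, hw, hwB⟩ := exists_vecMul_eq_zero_iff.mpr hdet
  refine ⟨w, hw, ?_⟩
  rw [vecMul_sub, sub_eq_zero, Algebra.algebraMap_eq_smul_one, vecMul_smul, vecMul_one] at hwB
  exact hwB.symm

theorem Matrix.re_neg_of_mem_spectrum_of_posDef_lyapunov {𝕜 : Type*} [RCLike 𝕜]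
    [DecidableEq n] {B Y : Matrix n n 𝕜} (hY : Y.PosDef) (hQ : (-(B * Y + Y * Bᴴ)).PosDef) {μ : 𝕜}
    (hμ : μ ∈ spectrum 𝕜 B) : RCLike.re μ < 0 := by
  obtain ⟨w, hw, hwB⟩ := exists_vecMul_eq_smul_of_mem_spectrum hμ
  set u := star w
  have hu : u ≠ 0 := by simpa [u] using hw
  have hBu : Bᴴ *ᵥ u = starRingEnd 𝕜 μ • u := by
    rw [← star_vecMul, hwB, star_smul]; rfl
  have hform : star u ⬝ᵥ (B * Y + Y * Bᴴ) *ᵥ u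
      = (2 * RCLike.re μ : ℝ) * (star u ⬝ᵥ Y *ᵥ u) := by
    rw [add_mulVec, ← mulVec_mulVec, ← mulVec_mulVec, hBu, dotProduct_add, dotProduct_mulVec,
      star_star, hwB, mulVec_smul, smul_dotProduct, dotProduct_smul, smul_eq_mul, smul_eq_mul,
      ← add_mul, RCLike.add_conj, RCLike.ofReal_mul, RCLike.ofReal_ofNat]
  have hYu := (RCLike.pos_iff.mp (hY.dotProduct_mulVec_pos hu)).1
  have hQu := (RCLike.pos_iff.mp (hQ.dotProduct_mulVec_pos hu)).1
  rw [neg_mulVec, dotProduct_neg, map_neg, hform, RCLike.re_ofReal_mul] at hQu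
  nlinarith

theorem Matrix.re_star_dotProduct_map_ofReal_mulVec (M : Matrix n n ℝ) (v : n → ℂ) :
    (star v ⬝ᵥ M.map Complex.ofReal *ᵥ v).re =
      (fun k => (v k).re) ⬝ᵥ M *ᵥ (fun k => (v k).re) +
      (fun k => (v k).im) ⬝ᵥ M *ᵥ (fun k => (v k).im) := by
  simp only [dotProduct, mulVec, Matrix.map_apply, Pi.star_apply, Finset.mul_sum,
    Complex.re_sum, Complex.mul_re, Complex.ofReal_re, Complex.ofReal_im,
    RCLike.star_def, Complex.conj_re, Complex.conj_im, Complex.mul_im, ← Finset.sum_add_distrib]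
  refine Finset.sum_congr rfl fun k _ => Finset.sum_congr rfl fun l _ => ?_
  ring

theorem Matrix.PosDef.map_complexOfReal {M : Matrix n n ℝ} (hM : M.PosDef) :
    (M.map Complex.ofReal).PosDef := by
  have hH : (M.map Complex.ofReal).IsHermitian :=
    hM.isHermitian.map _ fun _ => (Complex.conj_ofReal _).symm
  refine .of_dotProduct_mulVec_pos hH fun v hv =>
    Complex.lt_def.mpr ⟨?_, (hH.im_star_dotProduct_mulVec_self v).symm⟩
  rw [Complex.zero_re, re_star_dotProduct_map_ofReal_mulVec]
  set a : n → ℝ := fun k => (v k).re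
  set b : n → ℝ := fun k => (v k).im
  have hab : a ≠ 0 ∨ b ≠ 0 := by
    by_contra! h
    exact hv (funext fun k => Complex.ext (congrFun h.1 k) (congrFun h.2 k))
  have hquad : ∀ x, 0 ≤ x ⬝ᵥ M *ᵥ x := hM.posSemidef.dotProduct_mulVec_nonneg
  rcases hab with ha | hb
  · exact add_pos_of_pos_of_nonneg (hM.dotProduct_mulVec_pos ha) (hquad b)
  · exact add_pos_of_nonneg_of_pos (hquad a) (hM.dotProduct_mulVec_pos hb)

end

theorem Matrix.add_half_smul_one_mul_add_mul_transpose {n K : Type*} [Fintype n]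
    [DecidableEq n] [Field K] [NeZero (2 : K)] (A Y : Matrix n n K) (c : K) :
    (A + (c / 2) • 1) * Y + Y * (A + (c / 2) • 1)ᵀ = A * Y + Y * Aᵀ + c • Y := by
  rw [transpose_add, transpose_smul, transpose_one, add_mul, mul_add, Matrix.smul_mul, one_mul,
    Matrix.mul_smul, mul_one, add_add_add_comm, ← add_smul, add_halves]

theorem Matrix.PosDef.neg_add_smul_of_neg_add_sum_smul {n ι : Type*} [Fintype ι] [DecidableEq ι]
    {M : Matrix n n ℝ} {γ : ι → ℝ} {X : ι → Matrix n n ℝ} {i : ι}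
    (hγ : ∀ j ≠ i, 0 ≤ γ j) (hX : ∀ j ≠ i, (X j).PosSemidef)
    (h : (-(M + ∑ j, γ j • X j)).PosDef) : (-(M + γ i • X i)).PosDef := by
  have hrest : (∑ j ∈ Finset.univ.erase i, γ j • X j).PosSemidef :=
    posSemidef_sum _ fun j hj =>
      (hX j (Finset.ne_of_mem_erase hj)).smul (hγ j (Finset.ne_of_mem_erase hj))
  have hsplit :
      -(M + γ i • X i) = -(M + ∑ j, γ j • X j) + ∑ j ∈ Finset.univ.erase i, γ j • X j := by
    rw [← Finset.add_sum_erase _ _ (Finset.mem_univ i)]; abel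
  rw [hsplit]
  exact h.add_posSemidef hrest

theorem stmt10 {n N : ℕ} (A : Fin N → Matrix (Fin n) (Fin n) ℝ)
    (γ : Fin N → Fin N → ℝ) (hγ : ∀ i j, i ≠ j → 0 ≤ γ i j)
    (X : Fin N → Matrix (Fin n) (Fin n) ℝ) (hX : ∀ i, (X i).PosDef)
    (hneg : ∀ i, (-(A i * X i + X i * (A i)ᵀ + ∑ j, γ i j • X j)).PosDef) :
    ∀ i, ∀ μ ∈ spectrum ℂ ((A i + (γ i i / 2) • (1 : Matrix (Fin n) (Fin n) ℝ)).map
      (Complex.ofReal ·)), μ.re < 0 := by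
  intro i μ hμ
  set B := A i + (γ i i / 2) • (1 : Matrix (Fin n) (Fin n) ℝ)
  have hlyap : (-(B * X i + X i * Bᵀ)).PosDef := by
    rw [add_half_smul_one_mul_add_mul_transpose]
    exact .neg_add_smul_of_neg_add_sum_smul (fun j hj => hγ i j hj.symm)
      (fun j _ => (hX j).posSemidef) (hneg i)
  have hmap : (-(B * X i + X i * Bᵀ)).map Complex.ofReal =
      -(B.map Complex.ofReal * (X i).map Complex.ofReal +
        (X i).map Complex.ofReal * (B.map Complex.ofReal)ᴴ) := by
    rw [← conjTranspose_map _ fun r => (Complex.conj_ofReal r).symm,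
      conjTranspose_eq_transpose_of_trivial]
    change Complex.ofRealHom.mapMatrix _ = _
    simp only [map_neg, map_add, map_mul]
    rfl
  exact re_neg_of_mem_spectrum_of_posDef_lyapunov (hX i).map_complexOfReal
    (hmap ▸ hlyap.map_complexOfReal) hμ
end
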